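/- For every integer k ≥ 33, ∑_{j=1}^{k−1} (1 − 1/2^{2j}) · 2·(2j−1)!·ζ(2j)/(2π)^{2j} + (3/4 − log 2) < (1 − 1/2^{2k}) · 2·(2k−1)!·ζ(2k)/(2π)^{2k}, where ζ denotes the Riemann zeta function. -/

import Mathlib

/-!
Write `T j` for the `j`-th summand and `c = 3/4 - log 2`. Since `1 ≤ ζ(2j) ≤ ζ(2) < 2` and
`3/4 ≤ 1 - 4⁻ʲ ≤ 1`, the term `T j` lies between `3/2` and `4` times `(2j-1)!/(2π)^(2j)`, and the
ratio `2j(2j+1)/(2π)^2` of consecutive such quotients exceeds `16/3` once `j ≥ 8`; hence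
`2 T j ≤ T (j+1)` from there on. So once `∑_{j<k} T j + c < T k` holds, it holds for `k + 1` as
well: `∑_{j<k+1} T j + c < 2 T k ≤ T (k+1)`. The case `k = 33` is a crude numerical check: each
of the first `32` terms is at most `4 · 63!/(2π)^64`, while `T 33` is at least `156` times that
quotient.
-/

open Real Nat Finset

theorem Finset.sum_Ico_add_lt_of_two_nsmul_le {M : Type*} [AddCommMonoid M] [PartialOrder M]
    [IsOrderedCancelAddMonoid M] {f : ℕ → M} {a m : ℕ} {c : M} (ham : a ≤ m)
    (hdouble : ∀ j ≥ m, 2 • f j ≤ f (j + 1)) (hbase : ∑ j ∈ Ico a m, f j + c < f m) :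
    ∀ k ≥ m, ∑ j ∈ Ico a k, f j + c < f k := by
  intro k hk
  induction k, hk using Nat.le_induction with
  | base => exact hbase
  | succ k hmk ih =>
    calc ∑ j ∈ Ico a (k + 1), f j + c = (∑ j ∈ Ico a k, f j + c) + f k := by
          rw [sum_Ico_succ_top (ham.trans hmk), add_right_comm]
      _ < f k + f k := add_lt_add_left ih _
      _ = 2 • f k := (two_nsmul _).symm
      _ ≤ f (k + 1) := hdouble k hmk

lemma riemannZeta_natCast_re_eq_tsum {n : ℕ} (hn : 1 < n) :
    (riemannZeta n).re = ∑' m : ℕ, 1 / (m : ℝ) ^ n := by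
  have hreal : (∑' m : ℕ, 1 / (m : ℂ) ^ n) = ((∑' m : ℕ, 1 / (m : ℝ) ^ n : ℝ) : ℂ) := by
    push_cast [Complex.ofReal_tsum]
    rfl
  rw [zeta_nat_eq_tsum_of_gt_one hn, hreal, Complex.ofReal_re]

lemma one_le_riemannZeta_natCast_re {n : ℕ} (hn : 1 < n) : 1 ≤ (riemannZeta n).re := by
  rw [riemannZeta_natCast_re_eq_tsum hn]
  simpa using (Real.summable_one_div_nat_pow.mpr hn).le_tsum 1 (fun _ _ ↦ by positivity)

lemma riemannZeta_natCast_re_le_two {n : ℕ} (hn : 2 ≤ n) : (riemannZeta n).re ≤ 2 := by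
  have hle : ∑' m : ℕ, 1 / (m : ℝ) ^ n ≤ ∑' m : ℕ, 1 / (m : ℝ) ^ 2 := by
    refine (Real.summable_one_div_nat_pow.mpr hn).tsum_le_tsum (fun m ↦ ?_)
      (Real.summable_one_div_nat_pow.mpr one_lt_two)
    rcases m with _ | m
    · simp [zero_pow (by omega : n ≠ 0)]
    · gcongr
      exact_mod_cast Nat.succ_pos m
  rw [hasSum_zeta_two.tsum_eq] at hle
  rw [riemannZeta_natCast_re_eq_tsum hn]
  nlinarith [Real.pi_lt_d2, Real.pi_pos]

lemma sq_two_mul_pi_lt_forty : (2 * π) ^ 2 < 40 := by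
  nlinarith [Real.pi_lt_d2, Real.pi_pos]

noncomputable def factorialRatio (j : ℕ) : ℝ := ((2 * j - 1)! : ℝ) / (2 * π) ^ (2 * j)

lemma factorialRatio_pos (j : ℕ) : 0 < factorialRatio j := by
  unfold factorialRatio
  have := Real.pi_pos
  positivity

lemma factorialRatio_succ {j : ℕ} (hj : 1 ≤ j) :
    factorialRatio (j + 1) = 2 * j * (2 * j + 1) / (2 * π) ^ 2 * factorialRatio j := by
  obtain ⟨i, rfl⟩ : ∃ i, j = i + 1 := ⟨j - 1, by omega⟩
  have hfact : 2 * (i + 1 + 1) - 1 = (2 * i + 1 + 1) + 1 := by omega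
  have hfact' : 2 * (i + 1) - 1 = 2 * i + 1 := by omega
  unfold factorialRatio
  rw [hfact, hfact', factorial_succ, factorial_succ, mul_add 2 (i + 1) 1, pow_add]
  have := Real.pi_pos
  field_simp
  push_cast
  ring

lemma factorial_mul_forty_pow_le :
    ∀ j ∈ Icc 1 32, (2 * j - 1)! * 40 ^ (32 - j) ≤ 63! := by
  decide

lemma factorialRatio_le_factorialRatio_32 {j : ℕ} (hj : j ∈ Icc 1 32) :
    factorialRatio j ≤ factorialRatio 32 := by
  have hj32 : j ≤ 32 := (mem_Icc.mp hj).2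
  have hpow : (2 * π) ^ (2 * 32) = ((2 * π) ^ 2) ^ (32 - j) * (2 * π) ^ (2 * j) := by
    rw [← pow_mul, ← pow_add]
    congr 1
    omega
  have hnum : ((2 * j - 1)! : ℝ) * ((2 * π) ^ 2) ^ (32 - j) ≤ 63! :=
    calc ((2 * j - 1)! : ℝ) * ((2 * π) ^ 2) ^ (32 - j)
        ≤ (2 * j - 1)! * 40 ^ (32 - j) := by gcongr; exact sq_two_mul_pi_lt_forty.le
      _ ≤ 63! := by exact_mod_cast factorial_mul_forty_pow_le j hj
  unfold factorialRatio
  rw [hpow, div_le_div_iff₀ (by positivity) (by positivity), ← mul_assoc]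
  exact mul_le_mul_of_nonneg_right hnum (by positivity)

lemma three_fourths_le_factorialRatio_32 : 3 / 4 ≤ factorialRatio 32 := by
  have hden : (2 * π) ^ (2 * 32) ≤ 40 ^ 32 := by
    rw [pow_mul]
    gcongr
    exact sq_two_mul_pi_lt_forty.le
  have hnum : (3 : ℝ) / 4 * 40 ^ 32 ≤ (2 * 32 - 1)! := by
    norm_num [factorial]
  unfold factorialRatio
  rw [le_div_iff₀ (by positivity)]
  calc 3 / 4 * (2 * π) ^ (2 * 32) ≤ 3 / 4 * 40 ^ 32 := by gcongr
    _ ≤ _ := hnum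

noncomputable def zetaTerm (j : ℕ) : ℝ :=
  (1 - 1 / (2 : ℝ) ^ (2 * j)) * (2 * ((2 * j - 1)! : ℝ) * (riemannZeta (2 * j : ℕ)).re) /
    (2 * π) ^ (2 * j)

lemma zetaTerm_eq_mul_factorialRatio (j : ℕ) :
    zetaTerm j = (1 - 1 / (2 : ℝ) ^ (2 * j)) * (2 * (riemannZeta (2 * j : ℕ)).re) *
      factorialRatio j := by
  unfold zetaTerm factorialRatio
  ring

lemma zetaTerm_le {j : ℕ} (hj : 1 ≤ j) : zetaTerm j ≤ 4 * factorialRatio j := by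
  have hζ₁ := one_le_riemannZeta_natCast_re (n := 2 * j) (by omega)
  have hζ₂ := riemannZeta_natCast_re_le_two (n := 2 * j) (by omega)
  have hε : 0 ≤ 1 / (2 : ℝ) ^ (2 * j) := by positivity
  rw [zetaTerm_eq_mul_factorialRatio]
  gcongr (?_ : ℝ) * _
  · exact (factorialRatio_pos j).le
  · nlinarith

lemma le_zetaTerm {j : ℕ} (hj : 1 ≤ j) : 3 / 2 * factorialRatio j ≤ zetaTerm j := by
  have hζ₁ := one_le_riemannZeta_natCast_re (n := 2 * j) (by omega)
  have hε : 1 / (2 : ℝ) ^ (2 * j) ≤ 1 / 4 := by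
    gcongr
    calc (4 : ℝ) = 2 ^ 2 := by norm_num
      _ ≤ 2 ^ (2 * j) := pow_le_pow_right₀ one_le_two (by omega)
  rw [zetaTerm_eq_mul_factorialRatio]
  gcongr (?_ : ℝ) * _
  · exact (factorialRatio_pos j).le
  · nlinarith

lemma two_mul_zetaTerm_le_succ {j : ℕ} (hj : 8 ≤ j) : 2 * zetaTerm j ≤ zetaTerm (j + 1) := by
  have hq := sq_two_mul_pi_lt_forty
  have hratio : (16 : ℝ) / 3 ≤ 2 * j * (2 * j + 1) / (2 * π) ^ 2 := by
    have : (8 : ℝ) ≤ j := by exact_mod_cast hj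
    rw [le_div_iff₀ (by positivity)]
    nlinarith
  calc 2 * zetaTerm j ≤ 8 * factorialRatio j := by linarith [zetaTerm_le (j := j) (by omega)]
    _ ≤ 3 / 2 * (2 * j * (2 * j + 1) / (2 * π) ^ 2 * factorialRatio j) := by
      nlinarith [factorialRatio_pos j]
    _ = 3 / 2 * factorialRatio (j + 1) := by rw [factorialRatio_succ (by omega)]
    _ ≤ zetaTerm (j + 1) := le_zetaTerm (by omega)

lemma sum_zetaTerm_Ico_add_lt_zetaTerm_33 :
    ∑ j ∈ Ico 1 33, zetaTerm j + (3 / 4 - Real.log 2) < zetaTerm 33 := by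
  set X := factorialRatio 32
  have hsum : ∑ j ∈ Ico 1 33, zetaTerm j ≤ 128 * X :=
    calc ∑ j ∈ Ico 1 33, zetaTerm j ≤ (Ico 1 33).card • (4 * X) := by
          refine sum_le_card_nsmul _ _ _ fun j hj ↦ ?_
          have hj' : j ∈ Icc 1 32 := by simp only [mem_Ico, mem_Icc] at hj ⊢; omega
          exact (zetaTerm_le (mem_Icc.mp hj').1).trans
            (by linarith [factorialRatio_le_factorialRatio_32 hj'])
      _ = 128 * X := by norm_num [nsmul_eq_mul]; ring
  have hlast : 156 * X < zetaTerm 33 := by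
    have hratio : (156 : ℝ) < 3 / 2 * (64 * 65 / (2 * π) ^ 2) := by
      rw [mul_div_assoc', lt_div_iff₀ (by positivity)]
      linarith [sq_two_mul_pi_lt_forty]
    calc 156 * X < 3 / 2 * (64 * 65 / (2 * π) ^ 2) * X := by
          gcongr
          exact factorialRatio_pos 32
      _ = 3 / 2 * factorialRatio 33 := by
          rw [factorialRatio_succ (by norm_num)]
          push_cast
          ring
      _ ≤ zetaTerm 33 := le_zetaTerm (by norm_num)
  linarith [Real.log_nonneg one_le_two, three_fourths_le_factorialRatio_32]

theorem stmt_14 (k : ℕ) (hk : 33 ≤ k) :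
    ∑ j ∈ Finset.Icc 1 (k - 1),
        (1 - 1 / (2 : ℝ) ^ (2 * j)) * (2 * (Nat.factorial (2 * j - 1) : ℝ) *
          (riemannZeta (2 * j : ℕ)).re) / (2 * π) ^ (2 * j)
      + (3 / 4 - Real.log 2) <
    (1 - 1 / (2 : ℝ) ^ (2 * k)) * (2 * (Nat.factorial (2 * k - 1) : ℝ) *
      (riemannZeta (2 * k : ℕ)).re) / (2 * π) ^ (2 * k) := by
  obtain ⟨m, rfl⟩ : ∃ m, k = m + 1 := ⟨k - 1, by omega⟩
  rw [Nat.add_sub_cancel, ← Ico_add_one_right_eq_Icc]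
  have hdouble (j : ℕ) (hj : j ≥ 33) : 2 • zetaTerm j ≤ zetaTerm (j + 1) := by
    rw [two_nsmul, ← two_mul]
    exact two_mul_zetaTerm_le_succ (by omega)
  exact sum_Ico_add_lt_of_two_nsmul_le (by norm_num) hdouble
    sum_zetaTerm_Ico_add_lt_zetaTerm_33 (m + 1) hk
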